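/- The exponential mechanism with quality function q, sensitivity Δq = max over neighbouring datasets X,X' and outputs x of |q(X,x) − q(X',x)|, which outputs x with probability proportional to exp(ε·q(X,x)/(2Δq)), satisfies ε-differential privacy. -/

import Mathlib

/-- The exponential mechanism, outputting `x` with probability proportional to
`exp (ε * q X x / (2 * Δq))`, where `Δq` bounds `|q X x - q X' x|` over all
neighbouring datasets `X, X'` and outputs `x`, is ε-differentially private. -/
theorem exponential_mechanism_dp {D R : Type*} [Fintype R] [Nonempty R]
    (neighbor : D → D → Prop) (q : D → R → ℝ) (Δq ε : ℝ)
    (hΔ : 0 < Δq) (hε : 0 ≤ ε)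
    (hsens : ∀ X X', neighbor X X' → ∀ x : R, |q X x - q X' x| ≤ Δq) :
    ∀ X X', neighbor X X' → ∀ x : R,
      Real.exp (ε * q X x / (2 * Δq)) / (∑ y : R, Real.exp (ε * q X y / (2 * Δq)))
        ≤ Real.exp ε *
          (Real.exp (ε * q X' x / (2 * Δq)) / (∑ y : R, Real.exp (ε * q X' y / (2 * Δq)))) := by
  intro X X' hn x
  have key : ∀ (a b : ℝ), |a - b| ≤ Δq →
      Real.exp (ε * a / (2 * Δq)) ≤ Real.exp (ε / 2) * Real.exp (ε * b / (2 * Δq)) := by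
    intro a b hab
    rw [← Real.exp_add, Real.exp_le_exp]
    have h1 : a - b ≤ Δq := (abs_le.mp hab).2
    have h2 : ε * a / (2 * Δq) - ε * b / (2 * Δq) = ε * (a - b) / (2 * Δq) := by ring
    have h3 : ε * (a - b) ≤ ε * Δq := mul_le_mul_of_nonneg_left h1 hε
    have h4 : ε * (a - b) / (2 * Δq) ≤ ε * Δq / (2 * Δq) :=
      div_le_div_of_nonneg_right h3 (by linarith) |>.trans_eq rfl
    have h5 : ε * Δq / (2 * Δq) = ε / 2 := by field_simp
    linarith [h2 ▸ h4.trans_eq h5]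
  have hS : 0 < ∑ y : R, Real.exp (ε * q X y / (2 * Δq)) :=
    Finset.sum_pos (fun y _ => Real.exp_pos _) Finset.univ_nonempty
  have hS' : 0 < ∑ y : R, Real.exp (ε * q X' y / (2 * Δq)) :=
    Finset.sum_pos (fun y _ => Real.exp_pos _) Finset.univ_nonempty
  have hnum : Real.exp (ε * q X x / (2 * Δq)) ≤
      Real.exp (ε / 2) * Real.exp (ε * q X' x / (2 * Δq)) :=
    key _ _ (hsens X X' hn x)
  have hden : (∑ y : R, Real.exp (ε * q X' y / (2 * Δq))) ≤
      Real.exp (ε / 2) * ∑ y : R, Real.exp (ε * q X y / (2 * Δq)) := by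
    rw [Finset.mul_sum]
    refine Finset.sum_le_sum fun y _ => key _ _ ?_
    rw [abs_sub_comm]; exact hsens X X' hn y
  rw [mul_div_assoc', div_le_div_iff₀ hS hS']
  calc Real.exp (ε * q X x / (2 * Δq)) * (∑ y : R, Real.exp (ε * q X' y / (2 * Δq)))
      ≤ (Real.exp (ε / 2) * Real.exp (ε * q X' x / (2 * Δq))) *
        (Real.exp (ε / 2) * ∑ y : R, Real.exp (ε * q X y / (2 * Δq))) := by
        exact mul_le_mul hnum hden hS'.le (by positivity)
    _ = Real.exp ε * Real.exp (ε * q X' x / (2 * Δq)) *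
        (∑ y : R, Real.exp (ε * q X y / (2 * Δq))) := by
        rw [show Real.exp ε = Real.exp (ε/2) * Real.exp (ε/2) by
          rw [← Real.exp_add]; ring_nf]
        ring
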